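/- arXiv:1712.07002 — 4 statements merged into one kernel-verified Lean document; each statement's English description precedes it below -/
import Mathlib

section
/- Let r₁(k) = conj(b(conj k))/a(k) and h(k) = −conj(B(conj k))/(a(k)d(k)) with d(k) = a(k)·conj(A(conj k)) + b(k)·conj(B(conj k)), c(k) = b(k)A(k) − a(k)B(k), assuming a(k) ≠ 0 and d(k) ≠ 0 on ℝ, and assuming the global relation B(k)a(k) − A(k)b(k) = 0 and the determinant relations |a|² + |b|² = 1, |A|² + |B|² = 1 on ℝ. Then r₁(k) + h(k) = conj(c(conj k))/d(k) for k ∈ ℝ. -/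
open Complex ComplexConjugate

/- On the real line `conj k = k`, so after clearing the denominators `a` and `d` the claim
becomes `conj B · (a · conj a + b · conj b - 1) = 0`, which is the determinant relation for
`a, b`. -/

theorem div_add_neg_div_eq_of_mul_add_mul_eq_one {K : Type*} [Field K] {a a' b b' A' B' : K}
    (hdet : a * a' + b * b' = 1) (ha : a ≠ 0) (hd : a * A' + b * B' ≠ 0) :
    b' / a + -B' / (a * (a * A' + b * B')) = (b' * A' - a' * B') / (a * A' + b * B') := by
  rw [div_add_div _ _ ha (mul_ne_zero ha hd),
    div_eq_div_iff (mul_ne_zero ha (mul_ne_zero ha hd)) hd]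
  linear_combination B' * a * (a * A' + b * B') * hdet

theorem r_decomposition_general
    (a b A B c d r₁ h : ℂ → ℂ)
    (hab : ∀ k : ℝ, a k * conj (a (conj (k : ℂ))) + b k * conj (b (conj (k : ℂ))) = 1)
    (hc : ∀ k : ℂ, c k = b k * A k - a k * B k)
    (hd : ∀ k : ℂ, d k = a k * conj (A (conj k)) + b k * conj (B (conj k)))
    (ha0 : ∀ k : ℝ, a k ≠ 0)
    (hd0 : ∀ k : ℝ, d k ≠ 0)
    (hr₁ : ∀ k : ℝ, r₁ k = conj (b (conj (k : ℂ))) / a k)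
    (hh : ∀ k : ℝ, h k = -conj (B (conj (k : ℂ))) / (a k * d k)) :
    ∀ k : ℝ, r₁ k + h k = conj (c (conj (k : ℂ))) / d k := by
  intro k
  have hdk := hd0 k
  rw [hd] at hdk
  rw [hr₁, hh, hc, hd, map_sub, map_mul, map_mul]
  simp only [conj_ofReal] at hdk ⊢
  exact div_add_neg_div_eq_of_mul_add_mul_eq_one (by simpa using hab k) (ha0 k) hdk

/-- Under the determinant relations, the global relation B a − A b = 0, and the
nonvanishing of a and d on ℝ, the spectral functions r₁ = conj(b∘conj)/a and
h = −conj(B∘conj)/(a d) satisfy r₁ + h = conj(c∘conj)/d on ℝ. -/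
theorem r_decomposition
    (a b A B c d r₁ h : ℂ → ℂ)
    (hab : ∀ k : ℝ, a k * conj (a (conj (k : ℂ))) + b k * conj (b (conj (k : ℂ))) = 1)
    (hAB : ∀ k : ℝ, A k * conj (A (conj (k : ℂ))) + B k * conj (B (conj (k : ℂ))) = 1)
    (hglobal : ∀ k : ℝ, B k * a k - A k * b k = 0)
    (hc : ∀ k : ℂ, c k = b k * A k - a k * B k)
    (hd : ∀ k : ℂ, d k = a k * conj (A (conj k)) + b k * conj (B (conj k)))
    (ha0 : ∀ k : ℝ, a k ≠ 0)
    (hd0 : ∀ k : ℝ, d k ≠ 0)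
    (hr₁ : ∀ k : ℝ, r₁ k = conj (b (conj (k : ℂ))) / a k)
    (hh : ∀ k : ℝ, h k = -conj (B (conj (k : ℂ))) / (a k * d k)) :
    ∀ k : ℝ, r₁ k + h k = conj (c (conj (k : ℂ))) / d k :=
  r_decomposition_general a b A B c d r₁ h hab hc hd ha0 hd0 hr₁ hh
end

section
/- Let r : [k₁, k₂] → ℂ be continuous. Define δ(k) = exp( (1/(2πi)) ∫_{k₁}^{k₂} ln(1 + |r(s)|²)/(s − k) ds ) for k ∈ ℂ \ [k₁, k₂]. Then δ is analytic on ℂ \ [k₁, k₂] and satisfies the symmetry δ(k) = 1 / conj(δ(conj k)) for all k ∈ ℂ \ [k₁, k₂]. -/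
/-!
Near any `k₀` off the segment, the integrand `f s / (s - k)` and its `k`-derivative
`f s / (s - k) ^ 2` are dominated by a multiple of `‖f s‖`, so the Cauchy integral, and with
it `δ`, is holomorphic by differentiation under the integral sign. For the symmetry: the density
`log (1 + ‖r‖ ^ 2)` is real, so conjugation takes the Cauchy integral at `conj k` to the one at
`k`, while the prefactor `1 / (2πi)` is purely imaginary; hence `conj (δ (conj k)) = (δ k)⁻¹`.
-/

open Complex ComplexConjugate MeasureTheory Metric Set
open scoped Interval

theorem exists_pos_forall_mem_ball_le_dist {X : Type*} [PseudoMetricSpace X] {S : Set X}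
    (hS : IsClosed S) {x₀ : X} (hx₀ : x₀ ∉ S) :
    ∃ ε > 0, ∀ x ∈ ball x₀ ε, ∀ z ∈ S, ε ≤ dist x z := by
  obtain ⟨r, hr, hball⟩ := Metric.isOpen_iff.mp hS.isOpen_compl x₀ hx₀
  refine ⟨r / 2, by positivity, fun x hx z hz => ?_⟩
  have hrz : r ≤ dist z x₀ := not_lt.mp fun h => hball h hz
  linarith [dist_triangle z x x₀, mem_ball.mp hx, dist_comm x z]

theorem hasDerivAt_const_div_sub (c t x : ℂ) (hx : t - x ≠ 0) :
    HasDerivAt (fun y => c / (t - y)) (c / (t - x) ^ 2) x := by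
  simpa [div_eq_mul_inv] using (((hasDerivAt_id x).const_sub t).inv hx).const_mul c

theorem hasDerivAt_intervalIntegral_div_sub {f : ℝ → ℂ} {a b : ℝ}
    (hf : IntervalIntegrable f volume a b) {k₀ : ℂ} (hk₀ : k₀ ∉ ofReal '' [[a, b]]) :
    HasDerivAt (fun k => ∫ s in a..b, f s / ((s : ℂ) - k))
      (∫ s in a..b, f s / ((s : ℂ) - k₀) ^ 2) k₀ := by
  have hclosed : IsClosed (ofReal '' [[a, b]]) :=
    (isCompact_uIcc.image continuous_ofReal).isClosed
  obtain ⟨ε, hε, hfar⟩ := exists_pos_forall_mem_ball_le_dist hclosed hk₀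
  have hgap : ∀ x ∈ ball k₀ ε, ∀ s ∈ [[a, b]], ε ≤ ‖(s : ℂ) - x‖ :=
    fun x hx s hs => by simpa only [dist_eq_norm, norm_sub_rev] using hfar x hx s ⟨s, hs, rfl⟩
  have hne : ∀ x ∈ ball k₀ ε, ∀ s ∈ [[a, b]], (s : ℂ) - x ≠ 0 := fun x hx s hs =>
    norm_pos_iff.mp (hε.trans_le (hgap x hx s hs))
  have hmeas (n : ℕ) (x : ℂ) : AEStronglyMeasurable (fun s => f s / ((s : ℂ) - x) ^ n)
      (volume.restrict (Ι a b)) :=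
    hf.def'.aestronglyMeasurable.div₀
      (by fun_prop : Measurable fun s : ℝ => ((s : ℂ) - x) ^ n).aestronglyMeasurable
  have hint : IntervalIntegrable (fun s => f s / ((s : ℂ) - k₀)) volume a b := by
    simp only [div_eq_mul_inv]
    exact hf.mul_continuousOn <|
      ContinuousOn.inv₀ (by fun_prop) fun s hs => hne k₀ (mem_ball_self hε) s hs
  have hbound : ∀ᵐ s ∂volume, s ∈ Ι a b → ∀ x ∈ ball k₀ ε,
      ‖f s / ((s : ℂ) - x) ^ 2‖ ≤ ‖f s‖ / ε ^ 2 := by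
    refine ae_of_all _ fun s hs x hx => ?_
    rw [norm_div, norm_pow]
    gcongr
    exact hgap x hx s (uIoc_subset_uIcc hs)
  have hderiv : ∀ᵐ s ∂volume, s ∈ Ι a b → ∀ x ∈ ball k₀ ε,
      HasDerivAt (fun y => f s / ((s : ℂ) - y)) (f s / ((s : ℂ) - x) ^ 2) x :=
    ae_of_all _ fun s hs x hx =>
      hasDerivAt_const_div_sub _ _ _ (hne x hx s (uIoc_subset_uIcc hs))
  exact (intervalIntegral.hasDerivAt_integral_of_dominated_loc_of_deriv_le (ball_mem_nhds k₀ hε)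
    (.of_forall fun x => by simpa using hmeas 1 x) hint (hmeas 2 k₀) hbound
    (hf.norm.div_const _) hderiv).2

theorem conj_intervalIntegral_ofReal_div_sub (g : ℝ → ℝ) (a b : ℝ) (k : ℂ) :
    conj (∫ s in a..b, (g s : ℂ) / ((s : ℂ) - k)) =
      ∫ s in a..b, (g s : ℂ) / ((s : ℂ) - conj k) := by
  simp [← intervalIntegral.intervalIntegral_conj, map_div₀]

theorem conj_one_div_two_pi_I : conj (1 / (2 * Real.pi * I)) = -(1 / (2 * Real.pi * I)) := by
  simp only [map_div₀, map_one, map_mul, map_ofNat, conj_ofReal, conj_I, mul_neg, div_neg]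

theorem exp_mul_eq_one_div_conj_exp_mul_conj {c : ℂ} (hc : conj c = -c) (z : ℂ) :
    exp (c * z) = 1 / conj (exp (c * conj z)) := by
  rw [← exp_conj, map_mul, hc, conj_conj, neg_mul, exp_neg, one_div, inv_inv]

theorem conj_mem_ofReal_image_iff {A : Set ℝ} {k : ℂ} :
    conj k ∈ ofReal '' A ↔ k ∈ ofReal '' A := by
  constructor <;> rintro ⟨s, hs, h⟩ <;> refine ⟨s, hs, ?_⟩
  · rw [← conj_conj k, ← h, conj_ofReal]
  · rw [← h, conj_ofReal]

/-- The function δ(k) = exp((1/(2πi)) ∫_{k₁}^{k₂} ln(1+|r(s)|²)/(s−k) ds) is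
analytic on ℂ minus the segment [k₁,k₂] and satisfies δ(k) = 1/conj(δ(conj k)). -/
theorem delta_analytic_and_symmetric
    (k₁ k₂ : ℝ) (hk : k₁ < k₂) (r : ℝ → ℂ)
    (hr : ContinuousOn r (Set.Icc k₁ k₂))
    (δ : ℂ → ℂ)
    (hδ : ∀ k : ℂ, k ∉ (Complex.ofReal '' Set.Icc k₁ k₂) →
      δ k = Complex.exp ((1 / (2 * Real.pi * Complex.I)) *
        ∫ s in k₁..k₂, (Real.log (1 + ‖r s‖ ^ 2) : ℂ) / ((s : ℂ) - k))) :
    AnalyticOn ℂ δ ((Complex.ofReal '' Set.Icc k₁ k₂)ᶜ) ∧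
    ∀ k : ℂ, k ∉ (Complex.ofReal '' Set.Icc k₁ k₂) →
      δ k = 1 / conj (δ (conj k)) := by
  have hlog : IntervalIntegrable (fun s => (Real.log (1 + ‖r s‖ ^ 2) : ℂ)) volume k₁ k₂ :=
    (continuous_ofReal.comp_continuousOn <|
      (by fun_prop : ContinuousOn (fun s => 1 + ‖r s‖ ^ 2) (Icc k₁ k₂)).log
        fun s _ => by positivity).intervalIntegrable_of_Icc hk.le
  refine ⟨?_, fun k hkS => ?_⟩
  · refine DifferentiableOn.analyticOn (DifferentiableOn.congr (fun k hkS => ?_) hδ)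
      (isCompact_Icc.image continuous_ofReal).isClosed.isOpen_compl
    exact ((hasDerivAt_intervalIntegral_div_sub hlog (by rwa [uIcc_of_le hk.le])).const_mul
      _).cexp.differentiableAt.differentiableWithinAt
  · rw [hδ k hkS, hδ (conj k) (conj_mem_ofReal_image_iff.not.mpr hkS),
      ← conj_intervalIntegral_ofReal_div_sub (fun s => Real.log (1 + ‖r s‖ ^ 2))]
    exact exp_mul_eq_one_div_conj_exp_mul_conj conj_one_div_two_pi_I _
end

section
/- Let f be integrable and real-valued on [k₁,k₂] with k₁ < k₂. Define δ(k) = exp((1/(2πi)) ∫_{k₁}^{k₂} f(s)/(s−k) ds) for k off the segment. Then |δ(k)| and |δ(k)⁻¹| are uniformly bounded on ℂ \ [k₁, k₂]: there is C > 0 (depending on f) with C⁻¹ ≤ |δ(k)| ≤ C for all such k. -/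
/-!
Writing `k = a + i b`, the modulus of `δ(k)` is `exp` of the real part of the exponent, i.e.
`(2π)⁻¹ ∫ f(s) b / ((s - a)² + b²) ds`. Against the Poisson kernel `|b| / ((s - a)² + b²)`,
whose integral over any interval is at most `π` (it is a difference of two arctangents),
this is at most `M / 2` in absolute value whenever `|f| ≤ M`, so `C = exp (M / 2)` works.
-/

open Complex MeasureTheory Set

lemma integral_abs_div_sq_add_sq_le_pi (k₁ k₂ a b : ℝ) :
    ∫ s in k₁..k₂, |b| / ((s - a) ^ 2 + b ^ 2) ≤ Real.pi := by
  rcases eq_or_ne b 0 with rfl | hb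
  · simp [Real.pi_nonneg]
  have hc : 0 < |b| := abs_pos.mpr hb
  have hkernel : ∀ s : ℝ, |b| / ((s - a) ^ 2 + b ^ 2)
      = |b|⁻¹ * (1 + (s / |b| - a / |b|) ^ 2)⁻¹ := fun s => by
    rw [← sub_div, div_pow, sq_abs]
    field_simp
    rw [sq_abs]
    ring
  simp_rw [hkernel]
  rw [intervalIntegral.integral_const_mul, intervalIntegral.integral_comp_div_sub
      (fun x : ℝ => (1 + x ^ 2)⁻¹) hc.ne', integral_inv_one_add_sq, smul_eq_mul,
    ← mul_assoc, inv_mul_cancel₀ hc.ne', one_mul]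
  linarith [Real.arctan_lt_pi_div_two (k₂ / |b| - a / |b|),
    Real.neg_pi_div_two_lt_arctan (k₁ / |b| - a / |b|)]

lemma intervalIntegrable_abs_div_sq_add_sq (k₁ k₂ a b : ℝ) :
    IntervalIntegrable (fun s => |b| / ((s - a) ^ 2 + b ^ 2)) volume k₁ k₂ := by
  rcases eq_or_ne b 0 with rfl | hb
  · simp
  refine Continuous.intervalIntegrable ?_ _ _
  exact continuous_const.div (by fun_prop) fun s => by positivity

lemma im_inv_ofReal_sub (s : ℝ) (k : ℂ) :
    ((s : ℂ) - k)⁻¹.im = k.im / ((s - k.re) ^ 2 + k.im ^ 2) := by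
  simp only [inv_im, sub_im, sub_re, ofReal_im, ofReal_re, zero_sub, neg_neg, normSq_apply]
  ring

lemma abs_im_integral_div_ofReal_sub_le {k₁ k₂ M : ℝ} (hk : k₁ ≤ k₂) {f : ℝ → ℝ}
    (hf : ∀ s ∈ Icc k₁ k₂, |f s| ≤ M) (k : ℂ) :
    |(∫ s in k₁..k₂, (f s : ℂ) / ((s : ℂ) - k)).im| ≤ M * Real.pi := by
  have hM : 0 ≤ M := (abs_nonneg _).trans (hf k₁ ⟨le_rfl, hk⟩)
  by_cases hint : IntervalIntegrable (fun s => (f s : ℂ) / ((s : ℂ) - k)) volume k₁ k₂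
  swap
  · rw [intervalIntegral.integral_undef hint, zero_im, abs_zero]
    positivity
  have hpointwise : ∀ s ∈ Ioc k₁ k₂, ‖((f s : ℂ) / ((s : ℂ) - k)).im‖
      ≤ M * (|k.im| / ((s - k.re) ^ 2 + k.im ^ 2)) := fun s hs => by
    rw [div_eq_mul_inv, im_ofReal_mul, im_inv_ofReal_sub, Real.norm_eq_abs, abs_mul,
      abs_div, abs_of_nonneg (by positivity : 0 ≤ (s - k.re) ^ 2 + k.im ^ 2)]
    exact mul_le_mul_of_nonneg_right (hf s (Ioc_subset_Icc_self hs)) (by positivity)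
  rw [← imCLM_apply, ← imCLM.intervalIntegral_comp_comm hint]
  calc ‖∫ s in k₁..k₂, ((f s : ℂ) / ((s : ℂ) - k)).im‖
      ≤ ∫ s in k₁..k₂, M * (|k.im| / ((s - k.re) ^ 2 + k.im ^ 2)) :=
        intervalIntegral.norm_integral_le_of_norm_le hk (ae_of_all _ hpointwise)
          ((intervalIntegrable_abs_div_sq_add_sq k₁ k₂ k.re k.im).const_mul M)
    _ ≤ M * Real.pi := by
        rw [intervalIntegral.integral_const_mul]
        exact mul_le_mul_of_nonneg_left (integral_abs_div_sq_add_sq_le_pi _ _ _ _) hM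

lemma re_one_div_two_pi_I_mul (z : ℂ) :
    (1 / (2 * Real.pi * I) * z).re = z.im / (2 * Real.pi) := by
  have hcoef : 1 / (2 * Real.pi * I) = ((-(1 / (2 * Real.pi)) : ℝ) : ℂ) * I := by
    field_simp
    push_cast
    ring_nf
    simp
  rw [hcoef, mul_assoc, re_ofReal_mul, I_mul_re]
  ring

theorem delta_uniformly_bounded_general
    (k₁ k₂ : ℝ) (hk : k₁ < k₂) (f : ℝ → ℝ)
    (M : ℝ) (hbd : ∀ s ∈ Set.Icc k₁ k₂, |f s| ≤ M)
    (δ : ℂ → ℂ)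
    (hδ : ∀ k : ℂ, k ∉ (Complex.ofReal '' Set.Icc k₁ k₂) →
      δ k = Complex.exp ((1 / (2 * Real.pi * Complex.I)) *
        ∫ s in k₁..k₂, (f s : ℂ) / ((s : ℂ) - k))) :
    ∃ C : ℝ, 0 < C ∧ ∀ k : ℂ, k ∉ (Complex.ofReal '' Set.Icc k₁ k₂) →
      C⁻¹ ≤ ‖δ k‖ ∧ ‖δ k‖ ≤ C := by
  refine ⟨Real.exp (M / 2), Real.exp_pos _, fun k hkoff => ?_⟩
  have hre :
      |(1 / (2 * Real.pi * I) * ∫ s in k₁..k₂, (f s : ℂ) / ((s : ℂ) - k)).re| ≤ M / 2 := by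
    rw [re_one_div_two_pi_I_mul, abs_div, abs_of_pos Real.two_pi_pos, div_le_iff₀ Real.two_pi_pos]
    linarith [abs_im_integral_div_ofReal_sub_le hk.le hbd k]
  rw [hδ k hkoff, norm_exp, ← Real.exp_neg]
  exact ⟨Real.exp_le_exp.mpr (abs_le.mp hre).1, Real.exp_le_exp.mpr (abs_le.mp hre).2⟩

/-- For f real-valued, integrable and bounded on [k₁,k₂], the function
δ(k) = exp((1/(2πi)) ∫_{k₁}^{k₂} f(s)/(s−k) ds) and its inverse are uniformly
bounded off the segment: C⁻¹ ≤ |δ(k)| ≤ C. -/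
theorem delta_uniformly_bounded
    (k₁ k₂ : ℝ) (hk : k₁ < k₂) (f : ℝ → ℝ)
    (hint : IntervalIntegrable f MeasureTheory.volume k₁ k₂)
    (M : ℝ) (hbd : ∀ s ∈ Set.Icc k₁ k₂, |f s| ≤ M)
    (δ : ℂ → ℂ)
    (hδ : ∀ k : ℂ, k ∉ (Complex.ofReal '' Set.Icc k₁ k₂) →
      δ k = Complex.exp ((1 / (2 * Real.pi * Complex.I)) *
        ∫ s in k₁..k₂, (f s : ℂ) / ((s : ℂ) - k))) :
    ∃ C : ℝ, 0 < C ∧ ∀ k : ℂ, k ∉ (Complex.ofReal '' Set.Icc k₁ k₂) →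
      C⁻¹ ≤ ‖δ k‖ ∧ ‖δ k‖ ≤ C :=
  delta_uniformly_bounded_general k₁ k₂ hk f M hbd δ hδ
end

section
/- Let β > 0, ξ ≥ 0 with ξ < α²/(3β), α > 0, and let k₂ be the stationary point with α + 6βk₂ = √(α²−3βξ). For k = k₂ + u e^{iπ/4} with u > 0, the real part of Φ(k) = 2i(kξ + 4βk³ + 2αk²) equals Re Φ(k) = −4u²(√2 β u + √(α² − 3βξ)). In particular Re Φ(k) < 0 for all u > 0. -/
open Complex

/-!
Expanding the cubic phase about its stationary point `k₂` kills the linear term, and the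
quadratic coefficient is `2 (α + 6βk₂) = 2√(α² − 3βξ)`. Along the ray `w = u e^{iπ/4}` one has
`w² = i u²` and `w³ = i u³ e^{iπ/4}`, so `2i` times the quadratic and cubic terms contribute the
real parts `−4√(α² − 3βξ) u²` and `−4√2 β u³`, while `Φ(k₂)` is purely imaginary.
-/

lemma add_six_mul_eq_of_eq_div {α β s k : ℝ} (hβ : β ≠ 0) (hk : k = (-α + s) / (6 * β)) :
    α + 6 * β * k = s := by
  rw [hk]
  field_simp
  ring

lemma stationary_of_add_six_mul_sq {α β ξ k : ℝ} (hβ : β ≠ 0)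
    (hk : (α + 6 * β * k) ^ 2 = α ^ 2 - 3 * β * ξ) :
    ξ + 12 * β * k ^ 2 + 4 * α * k = 0 := by
  have h : 3 * β * (ξ + 12 * β * k ^ 2 + 4 * α * k) = 0 := by linear_combination hk
  simpa [hβ] using h

lemma cubic_phase_expand_at_stationary {R : Type*} [CommRing R] {α β ξ k₀ s : R}
    (hstat : ξ + 12 * β * k₀ ^ 2 + 4 * α * k₀ = 0) (hs : α + 6 * β * k₀ = s) (w : R) :
    (k₀ + w) * ξ + 4 * β * (k₀ + w) ^ 3 + 2 * α * (k₀ + w) ^ 2 =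
      (k₀ * ξ + 4 * β * k₀ ^ 3 + 2 * α * k₀ ^ 2) + 2 * s * w ^ 2 + 4 * β * w ^ 3 := by
  linear_combination w * hstat + 2 * w ^ 2 * hs

lemma exp_I_mul_pi_div_four_sq : exp (I * (Real.pi / 4)) ^ 2 = I := by
  rw [← exp_nat_mul]
  convert exp_pi_div_two_mul_I using 2
  push_cast
  ring

lemma exp_I_mul_pi_div_four_re : (exp (I * (Real.pi / 4))).re = Real.sqrt 2 / 2 := by
  rw [mul_comm, ← ofReal_ofNat, ← ofReal_div, exp_ofReal_mul_I_re, Real.cos_pi_div_four]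

lemma re_two_I_mul_on_diagonal_ray (r s β u : ℝ) :
    (2 * I * ((r : ℂ) + 2 * s * (u * exp (I * (Real.pi / 4))) ^ 2
      + 4 * β * (u * exp (I * (Real.pi / 4))) ^ 3)).re =
      -4 * u ^ 2 * (Real.sqrt 2 * β * u + s) := by
  have he3 : exp (I * (Real.pi / 4)) ^ 3 = I * exp (I * (Real.pi / 4)) := by
    rw [pow_succ, exp_I_mul_pi_div_four_sq]
  rw [mul_pow, mul_pow, exp_I_mul_pi_div_four_sq, he3]
  simp only [← ofReal_pow, mul_re, re_ofNat, I_re, mul_zero, im_ofNat, I_im, mul_one, sub_self,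
    add_re, ofReal_re, ofReal_im, sub_zero, mul_im, zero_mul, add_zero, exp_I_mul_pi_div_four_re,
    one_mul, zero_sub, mul_neg, zero_add, neg_zero, add_im, neg_mul, neg_inj]
  ring

theorem re_phase_on_ray_general
    (α β ξ : ℝ) (hβ : 0 < β) (hξ : ξ < α ^ 2 / (3 * β))
    (k₂ : ℝ) (hk₂ : k₂ = (-α + Real.sqrt (α ^ 2 - 3 * β * ξ)) / (6 * β))
    (Φ : ℂ → ℂ)
    (hΦ : ∀ k : ℂ, Φ k = 2 * Complex.I *
      (k * (ξ : ℂ) + 4 * (β : ℂ) * k ^ 3 + 2 * (α : ℂ) * k ^ 2)) :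
    ∀ u : ℝ, 0 < u →
      (Φ ((k₂ : ℂ) + (u : ℂ) * Complex.exp (Complex.I * (Real.pi / 4)))).re =
        -4 * u ^ 2 * (Real.sqrt 2 * β * u + Real.sqrt (α ^ 2 - 3 * β * ξ)) ∧
      (Φ ((k₂ : ℂ) + (u : ℂ) * Complex.exp (Complex.I * (Real.pi / 4)))).re < 0 := by
  intro u hu
  set s := Real.sqrt (α ^ 2 - 3 * β * ξ)
  have hdisc : 0 ≤ α ^ 2 - 3 * β * ξ := by
    have := (lt_div_iff₀ (by positivity : 0 < 3 * β)).mp hξ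
    linarith
  have hs : α + 6 * β * k₂ = s := add_six_mul_eq_of_eq_div hβ.ne' hk₂
  have hstat : ξ + 12 * β * k₂ ^ 2 + 4 * α * k₂ = 0 :=
    stationary_of_add_six_mul_sq hβ.ne' (by rw [hs]; exact Real.sq_sqrt hdisc)
  have hexpand := cubic_phase_expand_at_stationary
    (by exact_mod_cast hstat : (ξ : ℂ) + 12 * β * (k₂ : ℂ) ^ 2 + 4 * α * k₂ = 0)
    (by exact_mod_cast hs : (α : ℂ) + 6 * β * k₂ = s) (u * exp (I * (Real.pi / 4)))
  have hre : (Φ ((k₂ : ℂ) + (u : ℂ) * exp (I * (Real.pi / 4)))).re =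
      -4 * u ^ 2 * (Real.sqrt 2 * β * u + s) := by
    rw [hΦ, hexpand, ← re_two_I_mul_on_diagonal_ray (k₂ * ξ + 4 * β * k₂ ^ 3 + 2 * α * k₂ ^ 2)]
    push_cast
    ring
  refine ⟨hre, hre ▸ mul_neg_of_neg_of_pos (by nlinarith) (by positivity)⟩

/-- Signature computation: along the ray k = k₂ + u e^{iπ/4}, u > 0, the real part
of Φ(k) = 2i(kξ + 4βk³ + 2αk²) equals −4u²(√2 βu + √(α²−3βξ)), which is negative. -/
theorem re_phase_on_ray
    (α β ξ : ℝ) (hα : 0 < α) (hβ : 0 < β) (hξ0 : 0 ≤ ξ) (hξ : ξ < α ^ 2 / (3 * β))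
    (k₂ : ℝ) (hk₂ : k₂ = (-α + Real.sqrt (α ^ 2 - 3 * β * ξ)) / (6 * β))
    (Φ : ℂ → ℂ)
    (hΦ : ∀ k : ℂ, Φ k = 2 * Complex.I *
      (k * (ξ : ℂ) + 4 * (β : ℂ) * k ^ 3 + 2 * (α : ℂ) * k ^ 2)) :
    ∀ u : ℝ, 0 < u →
      (Φ ((k₂ : ℂ) + (u : ℂ) * Complex.exp (Complex.I * (Real.pi / 4)))).re =
        -4 * u ^ 2 * (Real.sqrt 2 * β * u + Real.sqrt (α ^ 2 - 3 * β * ξ)) ∧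
      (Φ ((k₂ : ℂ) + (u : ℂ) * Complex.exp (Complex.I * (Real.pi / 4)))).re < 0 :=
  re_phase_on_ray_general α β ξ hβ hξ k₂ hk₂ Φ hΦ
end
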